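/- Let G be a 4-regular graph on an odd number n of vertices with no proper cut of fewer than 6 edges, let M be a matching of G of size (n-1)/2 with unsaturated vertex r, and define z_e = 1 for e ∈ M, z_e = 5/12 for e ∈ δ(r), and z_e = 1/3 otherwise; let z' equal z except z'_{e+} = 0 for one fixed edge e+ ∈ M. Then z' lies in the spanning tree polytope of G: z'(E) = n - 1 and z'(E(S)) ≤ |S| - 1 for all S ⊆ V. -/

import Mathlib

open Finset

/-- The set `δ(S)` of edges of a multigraph having exactly one endpoint in `S`. -/
def cutEdges {V E : Type*} [Fintype E] [DecidableEq V] [DecidableEq E]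
    (ends : E → V × V) (S : Finset V) : Finset E :=
  Finset.univ.filter (fun e =>
    ((ends e).1 ∈ S ∧ (ends e).2 ∉ S) ∨ ((ends e).1 ∉ S ∧ (ends e).2 ∈ S))

/-- The set `E(S)` of edges with both endpoints in `S`. -/
def inEdges {V E : Type*} [Fintype E] [DecidableEq V] [DecidableEq E]
    (ends : E → V × V) (S : Finset V) : Finset E :=
  Finset.univ.filter (fun e => (ends e).1 ∈ S ∧ (ends e).2 ∈ S)

section Aux

variable {V E : Type*} [Fintype V] [Fintype E] [DecidableEq V] [DecidableEq E]

lemma cut_single_eq (ends : E → V × V) (hloop : ∀ e, (ends e).1 ≠ (ends e).2) (v : V) :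
    cutEdges ends ({v} : Finset V) =
      Finset.univ.filter (fun e => (ends e).1 = v ∨ (ends e).2 = v) := by
  ext e
  simp only [cutEdges, Finset.mem_filter, Finset.mem_univ, true_and, Finset.mem_singleton]
  constructor
  · rintro (⟨h1, _⟩ | ⟨_, h2⟩)
    · exact Or.inl h1
    · exact Or.inr h2
  · rintro (h | h)
    · exact Or.inl ⟨h, fun hc => hloop e (h.trans hc.symm)⟩
    · exact Or.inr ⟨fun hc => hloop e (hc.trans h.symm), h⟩

lemma handshake (ends : E → V × V) (hloop : ∀ e, (ends e).1 ≠ (ends e).2)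
    (w : E → ℝ) (S : Finset V) :
    ∑ v ∈ S, ∑ e ∈ cutEdges ends ({v} : Finset V), w e
      = 2 * ∑ e ∈ inEdges ends S, w e + ∑ e ∈ cutEdges ends S, w e := by
  have hsingle : ∀ v : V, ∑ e ∈ cutEdges ends ({v} : Finset V), w e
      = (∑ e : E, if (ends e).1 = v then w e else 0)
        + (∑ e : E, if (ends e).2 = v then w e else 0) := by
    intro v
    rw [cut_single_eq ends hloop, Finset.sum_filter, ← Finset.sum_add_distrib]
    refine Finset.sum_congr rfl fun e _ => ?_
    by_cases h1 : (ends e).1 = v <;> by_cases h2 : (ends e).2 = v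
    · exact absurd (h1.trans h2.symm) (hloop e)
    · simp [h1, h2]
    · simp [h1, h2]
    · simp [h1, h2]
  calc ∑ v ∈ S, ∑ e ∈ cutEdges ends ({v} : Finset V), w e
      = ∑ v ∈ S, ((∑ e : E, if (ends e).1 = v then w e else 0)
          + (∑ e : E, if (ends e).2 = v then w e else 0)) :=
        Finset.sum_congr rfl fun v _ => hsingle v
    _ = (∑ v ∈ S, ∑ e : E, if (ends e).1 = v then w e else 0)
          + (∑ v ∈ S, ∑ e : E, if (ends e).2 = v then w e else 0) :=
        Finset.sum_add_distrib
    _ = (∑ e : E, ∑ v ∈ S, if (ends e).1 = v then w e else 0)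
          + (∑ e : E, ∑ v ∈ S, if (ends e).2 = v then w e else 0) := by
        rw [Finset.sum_comm, Finset.sum_comm (s := S)]
    _ = (∑ e : E, if (ends e).1 ∈ S then w e else 0)
          + (∑ e : E, if (ends e).2 ∈ S then w e else 0) := by
        congr 1 <;> exact Finset.sum_congr rfl fun e _ => Finset.sum_ite_eq S _ _
    _ = ∑ e : E, ((if (ends e).1 ∈ S then w e else 0)
          + (if (ends e).2 ∈ S then w e else 0)) := Finset.sum_add_distrib.symm
    _ = 2 * ∑ e ∈ inEdges ends S, w e + ∑ e ∈ cutEdges ends S, w e := by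
        rw [inEdges, cutEdges, Finset.sum_filter, Finset.sum_filter, Finset.mul_sum,
          ← Finset.sum_add_distrib]
        refine Finset.sum_congr rfl fun e _ => ?_
        by_cases h1 : (ends e).1 ∈ S <;> by_cases h2 : (ends e).2 ∈ S <;>
          simp [h1, h2] <;> ring

end Aux

/-- Let `G` be a 4-regular loopless graph on an odd number `n` of vertices in which every
proper cut (`2 ≤ |S| ≤ n-2`) has at least `6` edges, let `M` be a matching of size
`(n-1)/2` whose unique unsaturated vertex is `r`, and define `z_e = 1` for `e ∈ M`,
`z_e = 5/12` for `e ∈ δ(r)` and `z_e = 1/3` otherwise; let `z'` agree with `z` except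
`z'_{e⁺} = 0` for one fixed `e⁺ ∈ M`.  Then `z'` lies in the spanning tree polytope of
`G`: `z'(E) = n - 1` and `z'(E(S)) ≤ |S| - 1` for every (nonempty) `S ⊆ V`. -/
theorem perturbed_point_in_spanning_tree_polytope {V E : Type*}
    [Fintype V] [Fintype E] [DecidableEq V] [DecidableEq E]
    (ends : E → V × V) (hloop : ∀ e, (ends e).1 ≠ (ends e).2)
    (hreg : ∀ v : V, (cutEdges ends ({v} : Finset V)).card = 4)
    (hnomin : ∀ S : Finset V, 2 ≤ S.card → S.card ≤ Fintype.card V - 2 →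
      6 ≤ (cutEdges ends S).card)
    (hodd : Odd (Fintype.card V))
    (M : Finset E)
    (hmatch : ∀ e ∈ M, ∀ f ∈ M, e ≠ f →
      ({(ends e).1, (ends e).2} ∩ {(ends f).1, (ends f).2} : Finset V) = ∅)
    (hMcard : 2 * M.card = Fintype.card V - 1)
    (r : V) (hr : ∀ e ∈ M, (ends e).1 ≠ r ∧ (ends e).2 ≠ r)
    (eplus : E) (heplus : eplus ∈ M)
    (z z' : E → ℝ)
    (hz : ∀ e, z e =
      if e ∈ M then 1 else if e ∈ cutEdges ends ({r} : Finset V) then 5/12 else 1/3)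
    (hz' : ∀ e, z' e = if e = eplus then 0 else z e) :
    (∑ e, z' e = (Fintype.card V : ℝ) - 1) ∧
    ∀ S : Finset V, S.Nonempty →
      ∑ e ∈ inEdges ends S, z' e ≤ (S.card : ℝ) - 1 := by
  set n := Fintype.card V with hn
  have hn1 : 1 ≤ n := by rcases hodd with ⟨k, hk⟩; omega
  -- basic facts about z
  have znotcut : ∀ e ∈ M, e ∉ cutEdges ends ({r} : Finset V) := by
    intro e heM
    rw [cut_single_eq ends hloop]
    simp only [Finset.mem_filter, Finset.mem_univ, true_and]
    push_neg
    exact ⟨(hr e heM).1, (hr e heM).2⟩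
  have zval : ∀ e, z e = 1/3 + (if e ∈ cutEdges ends ({r} : Finset V) then (1:ℝ)/12 else 0)
      + (if e ∈ M then (2:ℝ)/3 else 0) := by
    intro e
    rw [hz e]
    by_cases hM : e ∈ M
    · rw [if_pos hM, if_pos hM, if_neg (znotcut e hM)]
      norm_num
    · by_cases hR : e ∈ cutEdges ends ({r} : Finset V) <;> simp [hM, hR] <;> norm_num
  have zpos : ∀ e, 0 ≤ z e := by
    intro e; rw [hz e]; split_ifs <;> norm_num
  have z'le : ∀ e, z' e ≤ z e := by
    intro e; rw [hz' e]
    split_ifs with h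
    · exact zpos e
    · exact le_refl _
  have hzep : z eplus = 1 := by rw [hz eplus, if_pos heplus]
  have hz'ep : z' eplus = 0 := by rw [hz' eplus, if_pos rfl]
  -- degree in real form
  have hdeg : ∀ v : V, ∑ _e ∈ cutEdges ends ({v} : Finset V), (1:ℝ) = 4 := by
    intro v
    rw [Finset.sum_const, hreg v]
    norm_num
  have hsum_ind : ∀ (t : Finset E), ∑ e : E, (if e ∈ t then (1:ℝ) else 0) = t.card := by
    intro t
    rw [Finset.sum_ite_mem, Finset.univ_inter, Finset.sum_const]
    simp
  -- every vertex other than r is covered by M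
  have cover : ∀ v : V, v ≠ r → ∃ e ∈ M, (ends e).1 = v ∨ (ends e).2 = v := by
    intro v hv
    set U := M.biUnion (fun e => ({(ends e).1, (ends e).2} : Finset V)) with hU
    have hdisj : ∀ e ∈ M, ∀ f ∈ M, e ≠ f →
        Disjoint ({(ends e).1, (ends e).2} : Finset V) {(ends f).1, (ends f).2} := by
      intro e he f hf hef
      rw [Finset.disjoint_iff_inter_eq_empty]
      exact hmatch e he f hf hef
    have hcardU : U.card = 2 * M.card := by
      rw [hU, Finset.card_biUnion hdisj,
        Finset.sum_congr rfl (fun e _ => Finset.card_pair (hloop e)),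
        Finset.sum_const, smul_eq_mul, mul_comm]
    have hsub : U ⊆ Finset.univ.erase r := by
      intro x hx
      rw [hU, Finset.mem_biUnion] at hx
      obtain ⟨e, he, hxe⟩ := hx
      rw [Finset.mem_insert, Finset.mem_singleton] at hxe
      refine Finset.mem_erase.mpr ⟨?_, Finset.mem_univ x⟩
      rcases hxe with h | h
      · rw [h]; exact (hr e he).1
      · rw [h]; exact (hr e he).2
    have hUeq : U = Finset.univ.erase r := by
      apply Finset.eq_of_subset_of_card_le hsub
      rw [Finset.card_erase_of_mem (Finset.mem_univ r), Finset.card_univ, hcardU, hMcard]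
    have hvU : v ∈ U := by
      rw [hUeq]
      exact Finset.mem_erase.mpr ⟨hv, Finset.mem_univ v⟩
    rw [hU, Finset.mem_biUnion] at hvU
    obtain ⟨e, he, hxe⟩ := hvU
    rw [Finset.mem_insert, Finset.mem_singleton] at hxe
    exact ⟨e, he, hxe.imp Eq.symm Eq.symm⟩
  -- the M-weight of a vertex cut
  have sMval : ∀ v : V,
      (∑ e ∈ cutEdges ends ({v} : Finset V), (if e ∈ M then (1:ℝ) else 0))
        = if v = r then 0 else 1 := by
    intro v
    by_cases hv : v = r
    · subst hv
      rw [if_pos rfl]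
      apply Finset.sum_eq_zero
      intro e he
      rw [cut_single_eq ends hloop] at he
      simp only [Finset.mem_filter, Finset.mem_univ, true_and] at he
      rw [if_neg]
      intro heM
      rcases he with h | h
      · exact (hr e heM).1 h
      · exact (hr e heM).2 h
    · rw [if_neg hv]
      obtain ⟨e0, he0M, he0v⟩ := cover v hv
      have hmem : e0 ∈ cutEdges ends ({v} : Finset V) := by
        rw [cut_single_eq ends hloop]
        simp only [Finset.mem_filter, Finset.mem_univ, true_and]
        exact he0v
      rw [← Finset.sum_erase_add _ _ hmem, if_pos he0M]
      have hzero : ∀ f ∈ (cutEdges ends ({v} : Finset V)).erase e0,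
          (if f ∈ M then (1:ℝ) else 0) = 0 := by
        intro f hf
        obtain ⟨hfe, hfc⟩ := Finset.mem_erase.mp hf
        rw [if_neg]
        intro hfM
        rw [cut_single_eq ends hloop] at hfc
        simp only [Finset.mem_filter, Finset.mem_univ, true_and] at hfc
        have hint := hmatch f hfM e0 he0M hfe
        have hvmem : v ∈ (({(ends f).1, (ends f).2} : Finset V) ∩
            {(ends e0).1, (ends e0).2}) := by
          rw [Finset.mem_inter]
          refine ⟨?_, ?_⟩
          · simp only [Finset.mem_insert, Finset.mem_singleton]
            exact hfc.imp Eq.symm Eq.symm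
          · simp only [Finset.mem_insert, Finset.mem_singleton]
            exact he0v.imp Eq.symm Eq.symm
        rw [hint] at hvmem
        exact absurd hvmem (Finset.notMem_empty v)
      rw [Finset.sum_eq_zero hzero]
      norm_num
  -- total edge count (as a real sum)
  have hE2n : ∑ _e : E, (1:ℝ) = 2 * n := by
    have h := handshake ends hloop (fun _ => (1:ℝ)) Finset.univ
    have hinu : inEdges ends (Finset.univ : Finset V) = Finset.univ := by
      ext e; simp [inEdges]
    have hcutu : cutEdges ends (Finset.univ : Finset V) = ∅ := by
      ext e; simp [cutEdges]
    rw [hinu, hcutu, Finset.sum_empty, add_zero,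
      Finset.sum_congr rfl (fun v _ => hdeg v), Finset.sum_const, Finset.card_univ,
      nsmul_eq_mul] at h
    rw [← hn] at h
    linarith
  have hMR : 2 * (M.card : ℝ) = (n : ℝ) - 1 := by
    have h : ((2 * M.card : ℕ) : ℝ) = ((n - 1 : ℕ) : ℝ) := by rw [hMcard]
    rw [Nat.cast_mul, Nat.cast_ofNat, Nat.cast_sub hn1, Nat.cast_one] at h
    exact h
  have sumz : ∑ e : E, z e = n := by
    rw [Finset.sum_congr rfl (fun e _ => zval e), Finset.sum_add_distrib,
      Finset.sum_add_distrib]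
    have h1 : ∑ _e : E, (1:ℝ)/3 = (2 * n)/3 := by
      rw [← Finset.sum_div, hE2n]
    have h2 : ∑ e : E, (if e ∈ cutEdges ends ({r} : Finset V) then (1:ℝ)/12 else 0)
        = 4/12 := by
      rw [Finset.sum_congr rfl (fun e _ => by
        split_ifs <;> norm_num :
        ∀ e ∈ Finset.univ, (if e ∈ cutEdges ends ({r} : Finset V) then (1:ℝ)/12 else 0)
          = (if e ∈ cutEdges ends ({r} : Finset V) then (1:ℝ) else 0)/12),
        ← Finset.sum_div, hsum_ind, hreg r]
      norm_num
    have h3 : ∑ e : E, (if e ∈ M then (2:ℝ)/3 else 0) = 2/3 * M.card := by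
      rw [Finset.sum_congr rfl (fun e _ => by
        split_ifs <;> norm_num :
        ∀ e ∈ Finset.univ, (if e ∈ M then (2:ℝ)/3 else 0)
          = 2/3 * (if e ∈ M then (1:ℝ) else 0)),
        ← Finset.mul_sum, hsum_ind]
    rw [h1, h2, h3]
    linarith
  have sumz' : ∑ e : E, z' e = (n : ℝ) - 1 := by
    have h1 : ∑ e ∈ Finset.univ.erase eplus, z' e = ∑ e ∈ Finset.univ.erase eplus, z e :=
      Finset.sum_congr rfl fun e he => by rw [hz' e, if_neg (Finset.mem_erase.mp he).1]
    have h2 := Finset.sum_erase_add Finset.univ z' (Finset.mem_univ eplus)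
    have h3 := Finset.sum_erase_add Finset.univ z (Finset.mem_univ eplus)
    rw [← h2, hz'ep, add_zero, h1]
    linarith [sumz]
  refine ⟨sumz', ?_⟩
  intro S hS
  by_cases hSuniv : S = Finset.univ
  · subst hSuniv
    have hin : inEdges ends (Finset.univ : Finset V) = Finset.univ := by
      ext e; simp [inEdges]
    rw [hin, Finset.card_univ, ← hn]
    exact le_of_eq sumz'
  by_cases hc1 : S.card = 1
  · obtain ⟨v, hv⟩ := Finset.card_eq_one.mp hc1
    have hin : inEdges ends S = ∅ := by
      rw [Finset.eq_empty_iff_forall_notMem]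
      intro e he
      simp only [inEdges, Finset.mem_filter, Finset.mem_univ, true_and, hv,
        Finset.mem_singleton] at he
      exact hloop e (he.1.trans he.2.symm)
    rw [hin, Finset.sum_empty, hc1]
    norm_num
  -- common facts
  have hz'z : ∑ e ∈ inEdges ends S, z' e ≤ ∑ e ∈ inEdges ends S, z e :=
    Finset.sum_le_sum fun e _ => z'le e
  set A := ∑ _e ∈ inEdges ends S, (1:ℝ) with dA
  set B := ∑ _e ∈ cutEdges ends S, (1:ℝ) with dB
  set AM := ∑ e ∈ inEdges ends S, (if e ∈ M then (1:ℝ) else 0) with dAM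
  set BM := ∑ e ∈ cutEdges ends S, (if e ∈ M then (1:ℝ) else 0) with dBM
  set AR := ∑ e ∈ inEdges ends S,
    (if e ∈ cutEdges ends ({r} : Finset V) then (1:ℝ) else 0) with dAR
  set BR := ∑ e ∈ cutEdges ends S,
    (if e ∈ cutEdges ends ({r} : Finset V) then (1:ℝ) else 0) with dBR
  have F1 : ∑ e ∈ inEdges ends S, z e = A/3 + AR/12 + 2/3 * AM := by
    rw [dA, dAR, dAM, Finset.sum_div, Finset.sum_div, Finset.mul_sum,
      ← Finset.sum_add_distrib, ← Finset.sum_add_distrib]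
    refine Finset.sum_congr rfl fun e _ => ?_
    rw [zval e]
    split_ifs <;> norm_num
  have F2 : 2 * A + B = 4 * S.card := by
    have h := handshake ends hloop (fun _ => (1:ℝ)) S
    rw [Finset.sum_congr rfl (fun v _ => hdeg v), Finset.sum_const, nsmul_eq_mul] at h
    rw [← dA, ← dB] at h
    linarith
  have F3 : 2 * AM + BM = (S.card : ℝ) - (if r ∈ S then 1 else 0) := by
    have h := handshake ends hloop (fun e => if e ∈ M then (1:ℝ) else 0) S
    rw [Finset.sum_congr rfl (fun v _ => sMval v), ← dAM, ← dBM] at h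
    have hL : ∑ v ∈ S, (if v = r then (0:ℝ) else 1)
        = (S.card : ℝ) - (if r ∈ S then 1 else 0) := by
      rw [Finset.sum_congr rfl (fun v _ => by
        split_ifs <;> ring :
        ∀ v ∈ S, (if v = r then (0:ℝ) else 1) = 1 - (if v = r then (1:ℝ) else 0)),
        Finset.sum_sub_distrib, Finset.sum_const, nsmul_eq_mul, mul_one,
        Finset.sum_ite_eq' S r (fun _ => (1:ℝ))]
    rw [hL] at h
    linarith
  have hARnn : 0 ≤ AR := Finset.sum_nonneg fun e _ => by split_ifs <;> norm_num
  have hBRnn : 0 ≤ BR := Finset.sum_nonneg fun e _ => by split_ifs <;> norm_num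
  have hAMnn : 0 ≤ AM := Finset.sum_nonneg fun e _ => by split_ifs <;> norm_num
  have hBMnn : 0 ≤ BM := Finset.sum_nonneg fun e _ => by split_ifs <;> norm_num
  have hARzero : r ∉ S → AR = 0 := by
    intro hrS
    rw [dAR]
    apply Finset.sum_eq_zero
    intro e he
    simp only [inEdges, Finset.mem_filter, Finset.mem_univ, true_and] at he
    rw [if_neg]
    rw [cut_single_eq ends hloop]
    simp only [Finset.mem_filter, Finset.mem_univ, true_and]
    rintro (h | h)
    · exact hrS (h ▸ he.1)
    · exact hrS (h ▸ he.2)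
  have hARBR : r ∈ S → AR + BR = 4 := by
    intro hrS
    have key : ∀ e : E,
        (if (ends e).1 ∈ S ∧ (ends e).2 ∈ S then
          (if e ∈ cutEdges ends ({r} : Finset V) then (1:ℝ) else 0) else 0)
        + (if ((ends e).1 ∈ S ∧ (ends e).2 ∉ S) ∨ ((ends e).1 ∉ S ∧ (ends e).2 ∈ S) then
          (if e ∈ cutEdges ends ({r} : Finset V) then (1:ℝ) else 0) else 0)
        = (if e ∈ cutEdges ends ({r} : Finset V) then (1:ℝ) else 0) := by
      intro e
      by_cases h1 : (ends e).1 ∈ S <;> by_cases h2 : (ends e).2 ∈ S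
      · simp [h1, h2]
      · simp [h1, h2]
      · simp [h1, h2]
      · have hnc : e ∉ cutEdges ends ({r} : Finset V) := by
          rw [cut_single_eq ends hloop]
          simp only [Finset.mem_filter, Finset.mem_univ, true_and]
          rintro (h | h)
          · exact h1 (h ▸ hrS)
          · exact h2 (h ▸ hrS)
        simp [h1, h2, hnc]
    have split_sum : ∀ g : E → ℝ,
        (∑ e ∈ inEdges ends S, g e) + (∑ e ∈ cutEdges ends S, g e)
          = ∑ e : E, (if ((ends e).1 ∈ S ∨ (ends e).2 ∈ S) then g e else 0) := by
      intro g
      rw [inEdges, Finset.sum_filter, cutEdges, Finset.sum_filter,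
        ← Finset.sum_add_distrib]
      refine Finset.sum_congr rfl fun e _ => ?_
      by_cases h1 : (ends e).1 ∈ S <;> by_cases h2 : (ends e).2 ∈ S <;> simp [h1, h2]
    have hsum : AR + BR = ∑ e : E,
        (if e ∈ cutEdges ends ({r} : Finset V) then (1:ℝ) else 0) := by
      rw [dAR, dBR, split_sum]
      refine Finset.sum_congr rfl fun e _ => ?_
      by_cases h1 : (ends e).1 ∈ S <;> by_cases h2 : (ends e).2 ∈ S
      · simp [h1, h2]
      · simp [h1, h2]
      · simp [h1, h2]
      · have hnc : e ∉ cutEdges ends ({r} : Finset V) := by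
          rw [cut_single_eq ends hloop]
          simp only [Finset.mem_filter, Finset.mem_univ, true_and]
          rintro (h | h)
          · exact h1 (h ▸ hrS)
          · exact h2 (h ▸ hrS)
        simp [h1, h2, hnc]
    rw [hsum, hsum_ind, hreg r]
    norm_num
  by_cases hcn1 : S.card = n - 1
  · -- S misses exactly one vertex v
    have hSlt : S.card < n := by
      have hle : S.card ≤ n := by rw [hn]; exact Finset.card_le_univ S
      rcases lt_or_eq_of_le hle with h | h
      · exact h
      · exact absurd ((Finset.card_eq_iff_eq_univ S).mp (h.trans hn.symm ▸ h)) hSuniv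
    have hcard_sdiff : (Finset.univ \ S).card = 1 := by
      rw [Finset.card_sdiff_of_subset (Finset.subset_univ S), Finset.card_univ, ← hn]
      omega
    obtain ⟨v, hv⟩ := Finset.card_eq_one.mp hcard_sdiff
    have hmemS : ∀ x : V, x ∈ S ↔ x ≠ v := by
      intro x
      constructor
      · intro hx hxv
        have : x ∈ Finset.univ \ S → False := fun h => (Finset.mem_sdiff.mp h).2 hx
        exact this (by rw [hv, Finset.mem_singleton]; exact hxv)
      · intro hx
        by_contra hxS
        have : x ∈ Finset.univ \ S := Finset.mem_sdiff.mpr ⟨Finset.mem_univ x, hxS⟩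
        rw [hv, Finset.mem_singleton] at this
        exact hx this
    have hcutS : cutEdges ends S = cutEdges ends ({v} : Finset V) := by
      ext e
      simp only [cutEdges, Finset.mem_filter, Finset.mem_univ, true_and,
        Finset.mem_singleton, hmemS, not_not]
      tauto
    have hBv : B = 4 := by rw [dB, hcutS]; exact hdeg v
    have hBMv : BM = if v = r then 0 else 1 := by rw [dBM, hcutS]; exact sMval v
    by_cases hvr : v = r
    · -- the missing vertex is r
      have hrS : r ∉ S := fun h => (hmemS r).mp h hvr.symm
      have hBM0 : BM = 0 := by rw [hBMv, if_pos hvr]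
      have hAR0 := hARzero hrS
      rw [if_neg hrS] at F3
      have hep : eplus ∈ inEdges ends S := by
        simp only [inEdges, Finset.mem_filter, Finset.mem_univ, true_and]
        refine ⟨(hmemS _).mpr ?_, (hmemS _).mpr ?_⟩
        · rw [hvr]; exact (hr eplus heplus).1
        · rw [hvr]; exact (hr eplus heplus).2
      have hsplit : ∑ e ∈ inEdges ends S, z' e = (∑ e ∈ inEdges ends S, z e) - 1 := by
        rw [← Finset.sum_erase_add _ z' hep, ← Finset.sum_erase_add _ z hep, hz'ep, hzep]
        have heq : ∑ e ∈ (inEdges ends S).erase eplus, z' e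
            = ∑ e ∈ (inEdges ends S).erase eplus, z e :=
          Finset.sum_congr rfl fun e he => by
            rw [hz' e, if_neg (Finset.mem_erase.mp he).1]
        rw [heq]
        ring
      rw [hsplit, F1]
      linarith
    · -- the missing vertex is not r
      have hrS : r ∈ S := (hmemS r).mpr (fun h => hvr h.symm)
      have hBM1 : BM = 1 := by rw [hBMv, if_neg hvr]
      have h4 := hARBR hrS
      rw [if_pos hrS] at F3
      refine le_trans hz'z ?_
      rw [F1]
      linarith
  · -- proper cut: 2 ≤ |S| ≤ n - 2
    have hk2 : 2 ≤ S.card := by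
      have := Finset.card_pos.mpr hS
      omega
    have hkn : S.card ≤ n := by rw [hn]; exact Finset.card_le_univ S
    have hune : S.card ≠ n := by
      intro h
      exact hSuniv ((Finset.card_eq_iff_eq_univ S).mp (by rw [h, hn]))
    have hkn2 : S.card ≤ n - 2 := by omega
    have hB6 : (6:ℝ) ≤ B := by
      have hBcard : B = ((cutEdges ends S).card : ℝ) := by
        rw [dB, Finset.sum_const, nsmul_eq_mul, mul_one]
      rw [hBcard]
      exact_mod_cast hnomin S hk2 hkn2
    refine le_trans hz'z ?_
    rw [F1]
    by_cases hrS : r ∈ S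
    · have h4 := hARBR hrS
      rw [if_pos hrS] at F3
      linarith
    · have hAR0 := hARzero hrS
      rw [if_neg hrS] at F3
      linarith
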